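/- With BM and RM the bijections of Ser(B) defined by summing nested functionals over interval partitions and over all non-crossing partitions respectively, and RB defined by summing over partitions π ∈ NC(n) with π ≪ 1ₙ, one has BM ∘ RB = RM. -/

import Mathlib

/-! Recursive encoding of non-crossing partitions.

An `NCS` encodes a non-crossing partition of `{1,…,n}` (where `n = sz π`):
`empty` is the empty partition of the empty set, and `cons inner tail` is the partition whose
block containing `1` has `inner.length + 1` elements, with the non-crossing partition
`inner[j]` nested in the gap after the `(j+1)`-st element of that block, and with `tail` the
partition of the points lying after the largest element of that block. -/
inductive NCS : Type
  | empty : NCS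
  | cons (inner : List NCS) (tail : NCS) : NCS

namespace NCS

mutual
  /-- The number of points of the underlying set of the encoded partition. -/
  def sz : NCS → ℕ
    | .empty => 0
    | .cons inner tail => szL inner + 1 + sz tail
  /-- `szL inner = inner.length + Σ sz`. -/
  def szL : List NCS → ℕ
    | [] => 0
    | g :: gs => sz g + 1 + szL gs
end

mutual
  /-- The number of blocks of the encoded partition. -/
  def nbl : NCS → ℕ
    | .empty => 0
    | .cons inner tail => 1 + nblL inner + nbl tail
  def nblL : List NCS → ℕ
    | [] => 0
    | g :: gs => nbl g + nblL gs
end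

/-- Interval partitions: all the gaps are empty, recursively. -/
def isIntB : NCS → Bool
  | .empty => true
  | .cons inner tail => inner.all (fun g => match g with | .empty => true | _ => false) && isIntB tail

/-- `π ≪ 1ₙ`: the block containing `1` also contains `n`, i.e. the tail is empty. -/
def isOneB : NCS → Bool
  | .cons _ .empty => true
  | _ => false

end NCS
namespace NCS

mutual
  /-- The list of all encoded non-crossing partitions of `{1,…,n}`. -/
  def allNC : ℕ → List NCS
    | 0 => [NCS.empty]
    | n + 1 =>
        (List.range (n + 1)).attach.flatMap fun j =>
          (allL j.1).flatMap fun inner =>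
            (allNC (n - j.1)).map fun tail => NCS.cons inner tail
  termination_by n => n
  decreasing_by
    · have := j.2; simp [List.mem_range] at this; omega
    · have := j.2; simp [List.mem_range] at this; omega
  /-- All lists `gs` of encoded partitions with `szL gs = m`. -/
  def allL : ℕ → List (List NCS)
    | 0 => [[]]
    | m + 1 =>
        (List.range (m + 1)).attach.flatMap fun s =>
          (allNC s.1).flatMap fun g =>
            (allL (m - s.1)).map fun rest => g :: rest
  termination_by m => m
  decreasing_by
    · have := s.2; simp [List.mem_range] at this; omega
    · have := s.2; simp [List.mem_range] at this; omega
end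

end NCS

/-! Nested functionals and `B`-series. -/

section Series

variable {B : Type*} [Ring B] [Algebra ℂ B]

open NCS

mutual
  /-- Nested evaluation with boundary terms.  For an encoded partition `π` of `n` points and a
  list `cs = [c_0, c_1, …, c_n]`, `wEval F π cs` is the value of the parenthesized expression
  `c_0 W_1 c_1 W_2 c_2 ⋯ W_n c_n`, where the words `W_m` are the nesting words of `π` and
  `F k` is the term of the series with `k` arguments (i.e. the paper's `F^[k+1]`). -/
  def wEval (F : ℕ → List B → B) : NCS → List B → B
    | .empty, cs => cs.headD 1
    | .cons inner tail, cs =>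
        cs.headD 1 * F inner.length (wArgs F inner cs.tail) *
          wEval F tail (cs.tail.drop (NCS.szL inner))
  /-- The list of arguments fed to the term of the outer block: one argument per gap. -/
  def wArgs (F : ℕ → List B → B) : List NCS → List B → List B
    | [], _ => []
    | g :: gs, cs =>
        wEval F g (cs.take (NCS.sz g + 1)) :: wArgs F gs (cs.drop (NCS.sz g + 1))
end

/-- The nested functional `F^[π]` of a series, evaluated on a list of `sz π − 1` arguments. -/
def ncFun (F : ℕ → List B → B) (π : NCS) (bs : List B) : B :=
  wEval F π ((1 : B) :: (bs ++ [1]))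

/-- Two-coloured nested evaluation: the blocks of the outermost chain use the series `Fo`,
all blocks nested inside the gaps use the series `Fi`. -/
def wEvalO (Fo Fi : ℕ → List B → B) : NCS → List B → B
  | .empty, cs => cs.headD 1
  | .cons inner tail, cs =>
      cs.headD 1 * Fo inner.length (wArgs Fi inner cs.tail) *
        wEvalO Fo Fi tail (cs.tail.drop (NCS.szL inner))

/-- The coloured nested functional `(Fo, Fi)^[π, o_π]`: for `π ≪ 1ₙ` the unique outer block
carries a term of `Fo`, all other blocks carry terms of `Fi`. -/
def ncFunO (Fo Fi : ℕ → List B → B) (π : NCS) (bs : List B) : B :=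
  wEvalO Fo Fi π ((1 : B) :: (bs ++ [1]))

end Series

/-- A `B`-series: the term `F n` is a function of `n` arguments (the paper's `F^[n+1]`),
presented on lists of length exactly `n`. -/
def Ser (B : Type*) : Type _ :=
  (n : ℕ) → {l : List B // l.length = n} → B

instance (B : Type*) [One B] : Nonempty (Ser B) :=
  ⟨fun _ _ => 1⟩

/-- Application of a series to an arbitrary list (padded/truncated to the exact arity). -/
def Ser.app {B : Type*} [One B] (F : Ser B) (n : ℕ) (l : List B) : B :=
  F n ⟨List.takeD n l 1, by simp⟩

section Transforms

variable {B : Type*} [Ring B] [Algebra ℂ B]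

open NCS

/-- The series is multilinear: each term is (the restriction of) a `ℂ`-multilinear map. -/
def Ser.IsML (F : Ser B) : Prop :=
  ∀ n : ℕ, ∃ m : MultilinearMap ℂ (fun _ : Fin n => B) B,
    ∀ l : {l : List B // l.length = n}, F n l = m fun i => l.1.getD i.1 1

/-- The map `RM`: `(RM F)^[n] = Σ_{π ∈ NC(n)} F^[π]`. -/
def RMt (F : Ser B) : Ser B := fun n l =>
  ((allNC (n + 1)).map fun π => ncFun (F.app) π l.1).sum

/-- The map `BM`: `(BM F)^[n] = Σ_{π ∈ Int(n)} F^[π]`. -/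
def BMt (F : Ser B) : Ser B := fun n l =>
  (((allNC (n + 1)).filter fun π => isIntB π).map fun π => ncFun (F.app) π l.1).sum

/-- The map `RB`: `(RB F)^[n] = Σ_{π ∈ NC(n), π ≪ 1ₙ} F^[π]`. -/
def RBt (F : Ser B) : Ser B := fun n l =>
  (((allNC (n + 1)).filter fun π => isOneB π).map fun π => ncFun (F.app) π l.1).sum

/-- The map `RB_α`: `(RB_α F)^[n] = Σ_{π ≪ 1ₙ} (F, α∘F)^[π, o_π]`, the unique outer block
carrying a term of `F` and all other blocks carrying terms of `α ∘ F`. -/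
def RBa (α : B →ₗ[ℂ] B) (F : Ser B) : Ser B := fun n l =>
  (((allNC (n + 1)).filter fun π => isOneB π).map fun π =>
    ncFunO (F.app) (fun k bs => α (F.app k bs)) π l.1).sum

/-- Termwise composition `α ∘ F` of a linear map with a series. -/
def cS (α : B →ₗ[ℂ] B) (F : Ser B) : Ser B := fun n l => α (F n l)

/-- We identify `Σ_alg(B)` with `Ser B` via moment series, so an algebraic distribution *is*
its moment series.  The `R`-transform: the unique series with `RM (R_μ) = M_μ`. -/
noncomputable def Rtr (μ : Ser B) : Ser B := Function.invFun (RMt (B := B)) μ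

/-- The `B`-transform: the unique series with `BM (B_μ) = M_μ`. -/
noncomputable def Btr (μ : Ser B) : Ser B := Function.invFun (BMt (B := B)) μ

/-- The transformation `𝔹_α`, defined by `R_{𝔹_α(μ)} = RB_α (R_μ)`. -/
noncomputable def Bop (α : B →ₗ[ℂ] B) (μ : Ser B) : Ser B := RMt (RBa α (Rtr μ))

/-- The Boolean-to-free Bercovici–Pata bijection `𝔹`, defined by `R_{𝔹(μ)} = B_μ`. -/
noncomputable def BPbij (μ : Ser B) : Ser B := RMt (Btr μ)

/-- Free convolution power: `R_{μ^{⊞β}} = β ∘ R_μ`. -/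
noncomputable def freePow (β : B →ₗ[ℂ] B) (μ : Ser B) : Ser B := RMt (cS β (Rtr μ))

/-- Boolean convolution power: `B_{μ^{⊎β}} = β ∘ B_μ`. -/
noncomputable def boolPow (β : B →ₗ[ℂ] B) (μ : Ser B) : Ser B := BMt (cS β (Btr μ))

end Transforms

/-! Both sides are expanded along the block containing the first point. A non-crossing partition
is an outer block with arbitrary non-crossing partitions in its gaps (together a partition
`≪ 1ⱼ₊₁`), followed by an arbitrary non-crossing partition of the remaining points; an interval
partition is a block with empty gaps followed by an interval partition. Summed over all fillings
of the gaps, the first part gives exactly the term `(RB F)^[j+1]` carried by the first interval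
block in `BM (RB F)`. Hence both sides obey the same recursion, and they agree by strong induction
on `n`, once the nested evaluation is taken against arbitrary boundary terms. -/

theorem List.sum_map_flatMap {α β M : Type*} [AddMonoid M] (l : List α) (g : α → List β)
    (h : β → M) : ((l.flatMap g).map h).sum = (l.map fun x => ((g x).map h).sum).sum := by
  induction l with
  | nil => rfl
  | cons a l ih => simp [ih]

theorem List.flatMap_filter {α β : Type*} (l : List α) (p : α → Bool) (g : α → List β) :
    (l.filter p).flatMap g = l.flatMap fun a => if p a then g a else [] := by
  induction l with
  | nil => rfl
  | cons a l ih => cases h : p a <;> simp [h, ih]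

namespace NCS

def isEmptyB : NCS → Bool
  | .empty => true
  | .cons _ _ => false

theorem isIntB_cons (inner : List NCS) (tail : NCS) :
    isIntB (.cons inner tail) = (inner.all isEmptyB && isIntB tail) := by
  simp only [isIntB]
  congr
  funext g
  cases g <;> rfl

theorem allNC_zero : allNC 0 = [.empty] := by
  simp [allNC]

theorem allNC_succ (n : ℕ) : allNC (n + 1) = (List.range (n + 1)).flatMap fun j =>
    (allL j).flatMap fun inner => (allNC (n - j)).map (.cons inner) := by
  rw [allNC]
  simp

theorem allL_succ (m : ℕ) : allL (m + 1) = (List.range (m + 1)).flatMap fun s =>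
    (allNC s).flatMap fun g => (allL (m - s)).map (g :: ·) := by
  rw [allL]
  simp

mutual
theorem sz_of_mem_allNC : ∀ {n : ℕ} {π : NCS}, π ∈ allNC n → sz π = n
  | 0, π, h => by simp_all [allNC_zero, sz]
  | n + 1, π, h => by
    simp only [allNC_succ, List.mem_flatMap, List.mem_range, List.mem_map] at h
    obtain ⟨j, hj, inner, hinner, tail, htail, rfl⟩ := h
    rw [sz, szL_of_mem_allL hinner, sz_of_mem_allNC htail]
    omega

theorem szL_of_mem_allL : ∀ {m : ℕ} {gs : List NCS}, gs ∈ allL m → szL gs = m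
  | 0, gs, h => by simp_all [allL, szL]
  | m + 1, gs, h => by
    simp only [allL_succ, List.mem_flatMap, List.mem_range, List.mem_map] at h
    obtain ⟨s, hs, g, hg, rest, hrest, rfl⟩ := h
    rw [szL, sz_of_mem_allNC hg, szL_of_mem_allL hrest]
    omega
end

theorem szL_replicate_empty (j : ℕ) : szL (List.replicate j .empty) = j := by
  induction j with
  | zero => rfl
  | succ j ih => simp [List.replicate_succ, szL, sz, ih, Nat.add_comm]

theorem exists_eq_cons_of_mem_allNC_succ {n : ℕ} {π : NCS} (h : π ∈ allNC (n + 1)) :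
    ∃ inner tail, π = .cons inner tail := by
  simp only [allNC_succ, List.mem_flatMap, List.mem_map] at h
  obtain ⟨_, _, inner, _, tail, _, rfl⟩ := h
  exact ⟨inner, tail, rfl⟩

theorem filter_isOneB_allNC_succ (j : ℕ) :
    (allNC (j + 1)).filter isOneB = (allL j).map (.cons · .empty) := by
  have hshort : ∀ j' ∈ List.range j,
      ((allL j').flatMap fun inner => (allNC (j - j')).map (.cons inner)).filter isOneB = [] := by
    intro j' hj'
    refine List.filter_eq_nil_iff.mpr ?_
    simp only [List.mem_flatMap, List.mem_map]
    rintro _ ⟨inner, -, tail, htail, rfl⟩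
    obtain ⟨k, hk⟩ : ∃ k, j - j' = k + 1 := ⟨j - j' - 1, by simp at hj'; omega⟩
    obtain ⟨_, _, rfl⟩ := exists_eq_cons_of_mem_allNC_succ (hk ▸ htail)
    simp [isOneB]
  rw [allNC_succ, List.filter_flatMap, List.range_succ, List.flatMap_append,
    List.flatMap_eq_nil_iff.mpr hshort]
  simp [allNC_zero, ← List.map_eq_flatMap, List.filter_map, Function.comp_def, isOneB]

theorem filter_all_isEmptyB_allL (m : ℕ) :
    (allL m).filter (·.all isEmptyB) = [List.replicate m .empty] := by
  induction m with
  | zero => simp [allL]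
  | succ m ih =>
    have hlong : ∀ s ∈ List.range m,
        ((allNC (s + 1)).flatMap fun g => (allL (m - (s + 1))).map (g :: ·)).filter
          (·.all isEmptyB) = [] := by
      intro s _
      refine List.filter_eq_nil_iff.mpr ?_
      simp only [List.mem_flatMap, List.mem_map]
      rintro _ ⟨g, hg, rest, -, rfl⟩
      obtain ⟨_, _, rfl⟩ := exists_eq_cons_of_mem_allNC_succ hg
      simp [isEmptyB]
    rw [allL_succ, List.filter_flatMap, List.range_succ_eq_map, List.flatMap_cons,
      List.flatMap_map, List.flatMap_eq_nil_iff.mpr hlong, List.append_nil]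
    simp [allNC_zero, List.filter_map, Function.comp_def, isEmptyB, ih, List.replicate_succ]

theorem filter_isIntB_allNC_succ (n : ℕ) :
    (allNC (n + 1)).filter isIntB = (List.range (n + 1)).flatMap fun j =>
      ((allNC (n - j)).filter isIntB).map (.cons (List.replicate j .empty)) := by
  have hgaps : ∀ (inner : List NCS) (k : ℕ), ((allNC k).map (.cons inner)).filter isIntB =
      if inner.all isEmptyB then ((allNC k).filter isIntB).map (.cons inner) else [] := by
    intro inner k
    cases h : inner.all isEmptyB <;> simp [List.filter_map, Function.comp_def, isIntB_cons, h]
  rw [allNC_succ, List.filter_flatMap]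
  refine List.flatMap_congr fun j _ => ?_
  simp only [List.filter_flatMap, hgaps, ← List.flatMap_filter, filter_all_isEmptyB_allL,
    List.flatMap_singleton]

end NCS

open NCS

section Series

variable {B : Type*} [Ring B] (f : ℕ → List B → B)

theorem wEval_cons (inner : List NCS) (tail : NCS) (c : B) (cs : List B) :
    wEval f (.cons inner tail) (c :: cs) =
      c * f inner.length (wArgs f inner cs) * wEval f tail (cs.drop (szL inner)) := by
  rw [wEval]; rfl

theorem wArgs_take_szL (gs : List NCS) (cs : List B) :
    wArgs f gs (cs.take (szL gs)) = wArgs f gs cs := by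
  induction gs generalizing cs with
  | nil => simp [wArgs]
  | cons g gs ih =>
    have htake : (cs.take (sz g + 1 + szL gs)).take (sz g + 1) = cs.take (sz g + 1) := by
      rw [List.take_take, Nat.min_eq_left (by omega)]
    have hdrop : (cs.take (sz g + 1 + szL gs)).drop (sz g + 1) =
        (cs.drop (sz g + 1)).take (szL gs) := by
      rw [List.drop_take, Nat.add_sub_cancel_left]
    simp only [szL, wArgs, htake, hdrop, ih]

theorem wArgs_replicate_empty (j : ℕ) (cs : List B) (h : j ≤ cs.length) :
    wArgs f (List.replicate j .empty) cs = cs.take j := by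
  induction j generalizing cs with
  | zero => simp [wArgs]
  | succ j ih =>
    obtain ⟨c, cs, rfl⟩ := List.exists_cons_of_length_pos (by omega : 0 < cs.length)
    simp [List.replicate_succ, wArgs, wEval, sz, ih cs (by simpa using h)]

theorem ncFun_cons_empty (inner : List NCS) (bs : List B)
    (h : bs.length = szL inner) :
    ncFun f (.cons inner .empty) bs = f inner.length (wArgs f inner bs) := by
  rw [ncFun, wEval_cons, ← wArgs_take_szL f inner (bs ++ [1]), ← h, List.take_left,
    List.drop_left]
  simp [wEval]

theorem sum_wEval_allNC_succ (n : ℕ) (c : B) (cs : List B) :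
    ((allNC (n + 1)).map fun π => wEval f π (c :: cs)).sum =
      ((List.range (n + 1)).map fun j =>
        c * ((allL j).map fun inner => f inner.length (wArgs f inner cs)).sum *
          ((allNC (n - j)).map fun tail => wEval f tail (cs.drop j)).sum).sum := by
  rw [allNC_succ, List.sum_map_flatMap]
  refine congrArg List.sum (List.map_congr_left fun j _ => ?_)
  have hinner : ∀ inner ∈ allL j,
      ((allNC (n - j)).map fun tail => wEval f (.cons inner tail) (c :: cs)).sum =
        c * f inner.length (wArgs f inner cs) *
          ((allNC (n - j)).map fun tail => wEval f tail (cs.drop j)).sum := by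
    intro inner hinner
    simp only [wEval_cons, szL_of_mem_allL hinner, List.sum_map_mul_left]
  rw [List.sum_map_flatMap]
  simp only [List.map_map, Function.comp_def]
  rw [List.map_congr_left hinner, List.sum_map_mul_right, List.sum_map_mul_left]

theorem sum_wEval_filter_isIntB_allNC_succ (n : ℕ) (c : B) (cs : List B) (h : n ≤ cs.length) :
    (((allNC (n + 1)).filter isIntB).map fun ρ => wEval f ρ (c :: cs)).sum =
      ((List.range (n + 1)).map fun j =>
        c * f j (cs.take j) *
          (((allNC (n - j)).filter isIntB).map fun ρ => wEval f ρ (cs.drop j)).sum).sum := by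
  rw [filter_isIntB_allNC_succ, List.sum_map_flatMap]
  refine congrArg List.sum (List.map_congr_left fun j hj => ?_)
  have hj : j ≤ cs.length := by simp at hj; omega
  simp only [List.map_map, Function.comp_def, wEval_cons, List.length_replicate,
    szL_replicate_empty, wArgs_replicate_empty f j cs hj, List.sum_map_mul_left]

theorem RBt_app_take (F : Ser B) (j : ℕ) (cs : List B) (h : j ≤ cs.length) :
    (RBt F).app j (cs.take j) =
      ((allL j).map fun inner => F.app inner.length (wArgs F.app inner cs)).sum := by
  have hlen : (cs.take j).length = j := by simp [h]
  rw [Ser.app]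
  dsimp only [RBt]
  rw [List.takeD_eq_take _ hlen.ge, List.take_take, Nat.min_self, filter_isOneB_allNC_succ,
    List.map_map]
  refine congrArg List.sum (List.map_congr_left fun inner hinner => ?_)
  have hszL := szL_of_mem_allL hinner
  rw [Function.comp_apply, ncFun_cons_empty _ _ _ (hlen.trans hszL.symm), ← hszL,
    wArgs_take_szL]

theorem sum_wEval_filter_isIntB_RBt (F : Ser B) (m : ℕ) (cs : List B)
    (h : cs.length = m + 1) :
    (((allNC m).filter isIntB).map fun ρ => wEval (RBt F).app ρ cs).sum =
      ((allNC m).map fun π => wEval F.app π cs).sum := by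
  induction m using Nat.strong_induction_on generalizing cs with
  | _ m ih =>
    match m, cs with
    | 0, cs => simp [allNC_zero, wEval, show isIntB .empty from rfl]
    | n + 1, c :: cs =>
      have hlen : cs.length = n + 1 := by simpa using h
      rw [sum_wEval_filter_isIntB_allNC_succ _ n c cs (by omega), sum_wEval_allNC_succ]
      refine congrArg List.sum (List.map_congr_left fun j hj => ?_)
      have hj : j ≤ n := by simp at hj; omega
      rw [RBt_app_take F j cs (by omega), ih (n - j) (by omega) _ (by rw [List.length_drop]; omega)]

end Series

/-- `BM ∘ RB = RM` on `B`-series. -/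
theorem BM_comp_RB_eq_RM (B : Type*) [Ring B] [Algebra ℂ B] :
    (BMt (B := B)) ∘ RBt = RMt := by
  funext F n l
  exact sum_wEval_filter_isIntB_RBt F (n + 1) _ (by simp [l.2])
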